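/- There is no 8-divisible multiset of points in PG(v-1,2) of cardinality 24 with all point multiplicities at most 3. -/

import Mathlib

open scoped Classical

noncomputable def MVal {F V : Type*} [Field F] [AddCommGroup V] [Module F V]
    (M : Projectivization F V → ℕ) (K : Submodule F V) : ℕ :=
  ∑ᶠ P ∈ {P : Projectivization F V | P.submodule ≤ K}, M P

def IsDivisible {F V : Type*} [Field F] [AddCommGroup V] [Module F V] (Δ : ℕ)
    (M : Projectivization F V → ℕ) : Prop :=
  ∀ H : Submodule F V, Module.finrank F H + 1 = Module.finrank F V →
    MVal M H ≡ MVal M ⊤ [MOD Δ]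

def IsSpanning {F V : Type*} [Field F] [AddCommGroup V] [Module F V]
    (M : Projectivization F V → ℕ) : Prop :=
  (⨆ P ∈ {P : Projectivization F V | 0 < M P}, P.submodule) = ⊤

def gaussNum (q k : ℕ) : ℕ := ∑ i ∈ Finset.range k, q ^ i

def IsProjBase {F V : Type*} [Field F] [AddCommGroup V] [Module F V]
    (n : ℕ) (B : Finset (Projectivization F V)) : Prop :=
  B.card = n ∧ ∀ T ⊆ B, T.card = n - 1 →
    Module.finrank F ((⨆ P ∈ T, Projectivization.submodule P) : Submodule F V) = n - 1

/-!
Write `f x` for the multiplicity of the point spanned by `x ≠ 0` and `N ℓ` for the weight of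
`ker ℓ`, where `ℓ` runs over all functionals (so `N 0 = 24`). Divisibility makes every `N ℓ` a
multiple of `8`, hence `(N ℓ - 8) (N ℓ - 16) ≥ 0`, with value `128` whenever `ℓ` vanishes on the
support `T` of `f`. Counting the functionals that vanish at one or two given vectors evaluates the
sum of these terms as `|V| (∑ f² - 64) / 4`, and comparing gives `512 ≤ |span T| (∑ f² - 64)`.
Since multiplicities are at most `3`, `∑ f² ≤ 96 - 3 |T|` and `|T| ≥ 8`, which forces
`2 ^ |T| < |T| |span T|`. The restrictions of functionals to `T` then form a subspace of `𝔽₂ ^ T`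
whose quotient has fewer than `|T|` elements, so two unit vectors `e x`, `e y` are congruent
modulo it: some functional is nonzero on exactly the two points `x`, `y` of `T`, and its kernel
has weight `24 - f x - f y ∈ [18, 22]`, not a multiple of `8`.
-/

open Module Finset

noncomputable instance Module.Dual.fintype {K V : Type*} [Field K] [Finite K] [AddCommGroup V]
    [Module K V] [Module.Finite K V] : Fintype (Dual K V) :=
  have : Finite (Dual K V) := Module.finite_of_finite K
  Fintype.ofFinite _

section FiniteDimensional

variable {K V : Type*} [Field K] [AddCommGroup V] [Module K V] [Module.Finite K V]

theorem natCard_mul_natCard_of_finrank_add_finrank {A B : Type*} [AddCommGroup A] [Module K A]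
    [Module.Finite K A] [AddCommGroup B] [Module K B] [Module.Finite K B]
    (h : finrank K A + finrank K B = finrank K V) :
    Nat.card A * Nat.card B = Nat.card V := by
  rw [natCard_eq_pow_finrank (K := K) (V := A), natCard_eq_pow_finrank (K := K) (V := B),
    natCard_eq_pow_finrank (K := K) (V := V), ← pow_add, h]

theorem natCard_dual : Nat.card (Dual K V) = Nat.card V := by
  rw [natCard_eq_pow_finrank (K := K), natCard_eq_pow_finrank (K := K) (V := V),
    Subspace.dual_finrank_eq]

theorem Submodule.natCard_mul_natCard_dualAnnihilator (W : Submodule K V) :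
    Nat.card W * Nat.card W.dualAnnihilator = Nat.card V :=
  natCard_mul_natCard_of_finrank_add_finrank (Subspace.finrank_add_finrank_dualAnnihilator_eq W)

theorem LinearMap.natCard_range_mul_natCard_ker {N : Type*} [AddCommGroup N] [Module K N]
    (g : V →ₗ[K] N) : Nat.card (LinearMap.range g) * Nat.card (LinearMap.ker g) = Nat.card V :=
  natCard_mul_natCard_of_finrank_add_finrank g.finrank_range_add_finrank_ker

theorem Submodule.natCard_quotient_mul_natCard (S : Submodule K V) :
    Nat.card (V ⧸ S) * Nat.card S = Nat.card V :=
  natCard_mul_natCard_of_finrank_add_finrank S.finrank_quotient_add_finrank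

theorem exists_dual_ne_zero_iff_eq_or_eq [Finite K] (T : Finset V)
    (hT : Nat.card K ^ #T < #T * Nat.card (Submodule.span K (T : Set V))) :
    ∃ x ∈ T, ∃ y ∈ T, x ≠ y ∧ ∃ ℓ : Dual K V, ∀ z ∈ T, ℓ z ≠ 0 ↔ z = x ∨ z = y := by
  let φ : Dual K V →ₗ[K] (T → K) := LinearMap.pi fun z => Dual.eval K V z
  have hker : LinearMap.ker φ = (Submodule.span K (T : Set V)).dualAnnihilator := by
    apply SetLike.coe_injective
    rw [Submodule.coe_dualAnnihilator_span]
    ext ℓ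
    simp [φ, funext_iff, Set.subset_def]
  have hrange : Nat.card (LinearMap.range φ) = Nat.card (Submodule.span K (T : Set V)) := by
    have h := φ.natCard_range_mul_natCard_ker
    rw [hker, natCard_dual (K := K),
      ← (Submodule.span K (T : Set V)).natCard_mul_natCard_dualAnnihilator] at h
    exact Nat.eq_of_mul_eq_mul_right Nat.card_pos h
  have : Finite ((T → K) ⧸ LinearMap.range φ) := Module.finite_of_finite K
  have hQ : Nat.card ((T → K) ⧸ LinearMap.range φ) < Nat.card T := by
    have h := (LinearMap.range φ).natCard_quotient_mul_natCard
    rw [hrange, Nat.card_fun, Nat.card_eq_fintype_card (α := T), Fintype.card_coe] at h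
    rw [Nat.card_eq_fintype_card (α := T), Fintype.card_coe]
    rw [← h] at hT
    exact Nat.lt_of_mul_lt_mul_right hT
  obtain ⟨x, y, hxy, hq⟩ : ∃ x y : T, x ≠ y ∧
      Submodule.Quotient.mk (p := LinearMap.range φ) (Pi.single x (1 : K)) =
        Submodule.Quotient.mk (Pi.single y 1) := by
    by_contra! h
    exact hQ.not_ge (Nat.card_le_card_of_injective _ fun x y hq => by_contra fun hxy => h x y hxy hq)
  obtain ⟨ℓ, hℓ⟩ := (Submodule.Quotient.eq _).1 hq
  have hxy' : (x : V) ≠ y := Subtype.coe_ne_coe.2 hxy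
  refine ⟨x, x.2, y, y.2, hxy', ℓ, fun z hz => ?_⟩
  have hℓz := congrFun hℓ ⟨z, hz⟩
  simp only [φ, LinearMap.pi_apply, Dual.eval_apply, Pi.sub_apply, Pi.single_apply,
    Subtype.ext_iff] at hℓz
  rw [hℓz]
  by_cases hzx : z = x <;> by_cases hzy : z = y <;> simp_all

section Annihilators

variable [Finite K]

theorem natCard_span_mul_card_filter_forall_apply_eq_zero (s : Set V) :
    Nat.card (Submodule.span K s) * #{ℓ : Dual K V | ∀ x ∈ s, ℓ x = 0} = Nat.card V := by
  rw [← (Submodule.span K s).natCard_mul_natCard_dualAnnihilator, ← Fintype.card_subtype,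
    ← Nat.card_eq_fintype_card]
  congr 1
  refine Nat.card_congr (Equiv.subtypeEquivRight fun ℓ => ?_)
  rw [← SetLike.mem_coe, Submodule.coe_dualAnnihilator_span]
  simp [Set.subset_def]

theorem natCard_mul_card_filter_apply_eq_zero [DecidableEq K] {x : V} (hx : x ≠ 0) :
    Nat.card K * #{ℓ : Dual K V | ℓ x = 0} = Nat.card V := by
  have h := natCard_span_mul_card_filter_forall_apply_eq_zero (K := K) (V := V) {x}
  rw [natCard_eq_pow_finrank (K := K) (V := Submodule.span K {x}), finrank_span_singleton hx,
    pow_one] at h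
  simpa using h

theorem natCard_sq_mul_card_filter_apply_eq_zero_and [DecidableEq K] {x y : V}
    (hxy : LinearIndependent K ![x, y]) :
    Nat.card K ^ 2 * #{ℓ : Dual K V | ℓ x = 0 ∧ ℓ y = 0} = Nat.card V := by
  have h := natCard_span_mul_card_filter_forall_apply_eq_zero (K := K) (V := V) {x, y}
  rw [natCard_eq_pow_finrank (K := K) (V := Submodule.span K {x, y}),
    ← Matrix.range_cons_cons_empty x y ![], finrank_span_eq_card hxy, Fintype.card_fin] at h
  simpa [and_comm] using h

end Annihilators

end FiniteDimensional

section KerWeight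

variable {K V R : Type*} [Field K] [DecidableEq K] [AddCommGroup V] [Module K V] [Fintype V]
  [AddCommMonoid R]

def kerWeight (f : V → R) (ℓ : Dual K V) : R :=
  ∑ x with ℓ x = 0, f x

theorem kerWeight_add_sum_filter_ne_zero (f : V → R) (ℓ : Dual K V) :
    kerWeight f ℓ + ∑ x with ℓ x ≠ 0, f x = ∑ x, f x :=
  sum_filter_add_sum_filter_not _ _ _

theorem kerWeight_eq_sum_of_forall_support {f : V → R} {ℓ : Dual K V}
    (h : ∀ x ∈ Function.support f, ℓ x = 0) : kerWeight f ℓ = ∑ x, f x := by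
  rw [← kerWeight_add_sum_filter_ne_zero f ℓ, sum_eq_zero fun x hx => ?_, add_zero]
  by_contra hfx
  exact (mem_filter.1 hx).2 (h x hfx)

theorem kerWeight_add_add_eq_sum {f : V → R} {ℓ : Dual K V} {x y : V} (hxy : x ≠ y)
    (hx : f x ≠ 0) (hy : f y ≠ 0) (h : ∀ z, f z ≠ 0 → (ℓ z ≠ 0 ↔ z = x ∨ z = y)) :
    kerWeight f ℓ + (f x + f y) = ∑ z, f z := by
  rw [← kerWeight_add_sum_filter_ne_zero f ℓ, ← sum_pair hxy]
  congr 1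
  refine sum_subset (fun z hz => ?_) fun z hz hzxy => ?_
  · simp only [mem_insert, mem_singleton] at hz
    rcases hz with rfl | rfl
    · simpa using (h z hx).2 (Or.inl rfl)
    · simpa using (h z hy).2 (Or.inr rfl)
  · by_contra hfz
    exact hzxy (by simpa using (h z hfz).1 (mem_filter.1 hz).2)

end KerWeight

theorem sub_mul_sub_two_mul_nonneg_of_dvd {d n : ℤ} (h : d ∣ n) : 0 ≤ (n - d) * (n - 2 * d) := by
  obtain ⟨m, rfl⟩ := h
  have hm : 0 ≤ (m - 1) * (m - 2) := by
    rcases le_or_gt m 1 with hm | hm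
    · exact mul_nonneg_of_nonpos_of_nonpos (by linarith) (by linarith)
    · exact mul_nonneg (by linarith) (by linarith)
  calc (0 : ℤ) ≤ d ^ 2 * ((m - 1) * (m - 2)) := mul_nonneg (sq_nonneg d) hm
    _ = (d * m - d) * (d * m - 2 * d) := by ring

section Binary

variable {V : Type*} [AddCommGroup V] [Module (ZMod 2) V]

theorem ZModModule.linearIndependent_pair {x y : V} (hx : x ≠ 0) (hy : y ≠ 0) (hxy : x ≠ y) :
    LinearIndependent (ZMod 2) ![x, y] := by
  refine (LinearIndependent.pair_iff' hx).2 fun a => ?_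
  have h01 : ∀ a : ZMod 2, a = 0 ∨ a = 1 := by decide
  rcases h01 a with rfl | rfl
  · simpa using hy.symm
  · simpa using hxy

variable [Fintype V]

theorem two_mul_card_filter_apply_eq_zero {x : V} (hx : x ≠ 0) :
    2 * #{ℓ : Dual (ZMod 2) V | ℓ x = 0} = Nat.card V := by
  have h := natCard_mul_card_filter_apply_eq_zero (K := ZMod 2) hx
  rwa [Nat.card_zmod] at h

theorem four_mul_card_filter_apply_eq_zero_and {x y : V} (hx : x ≠ 0) (hy : y ≠ 0)
    (hxy : x ≠ y) : 4 * #{ℓ : Dual (ZMod 2) V | ℓ x = 0 ∧ ℓ y = 0} = Nat.card V := by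
  have h := natCard_sq_mul_card_filter_apply_eq_zero_and
    (ZModModule.linearIndependent_pair hx hy hxy)
  rwa [Nat.card_zmod] at h

section Moments

variable {R : Type*} [CommSemiring R] {f : V → R}

theorem two_mul_sum_kerWeight (hf : f 0 = 0) :
    2 * ∑ ℓ : Dual (ZMod 2) V, kerWeight f ℓ = Nat.card V * ∑ x, f x := by
  have hsum : ∑ ℓ : Dual (ZMod 2) V, kerWeight f ℓ =
      ∑ x, #{ℓ : Dual (ZMod 2) V | ℓ x = 0} * f x := by
    simp only [kerWeight, sum_filter]
    rw [sum_comm]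
    refine sum_congr rfl fun x _ => ?_
    rw [sum_ite, sum_const_zero, add_zero, sum_const, nsmul_eq_mul]
  rw [hsum, mul_sum, mul_sum]
  refine sum_congr rfl fun x _ => ?_
  rcases eq_or_ne x 0 with rfl | hx
  · simp [hf]
  · rw [← mul_assoc, ← Nat.cast_ofNat, ← Nat.cast_mul, two_mul_card_filter_apply_eq_zero hx]

theorem four_mul_sum_kerWeight_sq (hf : f 0 = 0) :
    4 * ∑ ℓ : Dual (ZMod 2) V, kerWeight f ℓ ^ 2 =
      Nat.card V * ((∑ x, f x) ^ 2 + ∑ x, f x ^ 2) := by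
  have hsum : ∑ ℓ : Dual (ZMod 2) V, kerWeight f ℓ ^ 2 =
      ∑ x, ∑ y, #{ℓ : Dual (ZMod 2) V | ℓ x = 0 ∧ ℓ y = 0} * (f x * f y) := by
    simp only [kerWeight, sq, sum_mul_sum, sum_filter]
    rw [sum_comm]
    refine sum_congr rfl fun x _ => ?_
    rw [sum_comm]
    refine sum_congr rfl fun y _ => ?_
    simp only [ite_zero_mul_ite_zero]
    rw [sum_ite, sum_const_zero, add_zero, sum_const, nsmul_eq_mul]
  have hterm : ∀ x y, 4 * (#{ℓ : Dual (ZMod 2) V | ℓ x = 0 ∧ ℓ y = 0} * (f x * f y)) =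
      Nat.card V * (f x * f y) + if x = y then Nat.card V * f x ^ 2 else 0 := by
    intro x y
    rcases eq_or_ne x 0 with rfl | hx
    · simp [hf]
    rcases eq_or_ne y 0 with rfl | hy
    · simp [hf, hx]
    rcases eq_or_ne x y with rfl | hxy
    · simp only [and_self, if_true]
      rw [← two_mul_card_filter_apply_eq_zero hx]
      push_cast
      ring
    · rw [if_neg hxy, add_zero, ← mul_assoc, ← Nat.cast_ofNat, ← Nat.cast_mul,
        four_mul_card_filter_apply_eq_zero_and hx hy hxy]
  rw [hsum, mul_sum]
  simp_rw [mul_sum, hterm, sum_add_distrib, sum_ite_eq, mem_univ, if_true, ← mul_sum, sq,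
    sum_mul_sum]
  rw [← sum_mul, ← sum_mul_sum]
  ring

end Moments

theorem four_mul_sum_kerWeight_sub_mul_sub {R : Type*} [CommRing R] {f : V → R} (hf : f 0 = 0)
    {a : R} (hsum : ∑ x, f x = 3 * a) :
    4 * ∑ ℓ : Dual (ZMod 2) V, (kerWeight f ℓ - a) * (kerWeight f ℓ - 2 * a) =
      Nat.card V * (∑ x, f x ^ 2 - a ^ 2) := by
  have h1 := two_mul_sum_kerWeight hf
  have h2 := four_mul_sum_kerWeight_sq hf
  have hcard : (Fintype.card (Dual (ZMod 2) V) : R) = Nat.card V := by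
    rw [← Nat.card_eq_fintype_card, natCard_dual (K := ZMod 2)]
  have hexp : ∀ ℓ : Dual (ZMod 2) V, (kerWeight f ℓ - a) * (kerWeight f ℓ - 2 * a) =
      kerWeight f ℓ ^ 2 - 3 * a * kerWeight f ℓ + 2 * a ^ 2 := fun ℓ => by ring
  simp only [hexp, sum_add_distrib, sum_sub_distrib, ← mul_sum, sum_const, card_univ,
    nsmul_eq_mul, hcard]
  rw [hsum] at h1 h2
  linear_combination h2 - 6 * a * h1

theorem le_natCard_span_support_mul_sum_sq {f : V → ℕ} {Δ : ℕ} (hf : f 0 = 0)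
    (hsum : ∑ x, f x = 3 * Δ) (hdvd : ∀ ℓ : Dual (ZMod 2) V, Δ ∣ kerWeight f ℓ) :
    8 * Δ ^ 2 + Nat.card (Submodule.span (ZMod 2) (Function.support f)) * Δ ^ 2 ≤
      Nat.card (Submodule.span (ZMod 2) (Function.support f)) * ∑ x, f x ^ 2 := by
  set c := Nat.card (Submodule.span (ZMod 2) (Function.support f))
  set g : V → ℤ := fun x => f x
  have hg : ∀ ℓ : Dual (ZMod 2) V, kerWeight g ℓ = kerWeight f ℓ := fun ℓ => by
    simp [g, kerWeight]
  have hmoment := four_mul_sum_kerWeight_sub_mul_sub (f := g) (a := (Δ : ℤ)) (by simp [g, hf])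
    (by simp [g, ← Nat.cast_sum, hsum])
  set A : Finset (Dual (ZMod 2) V) := {ℓ | ∀ x ∈ Function.support f, ℓ x = 0}
  have hA : c * #A = Nat.card V := by
    convert natCard_span_mul_card_filter_forall_apply_eq_zero (K := ZMod 2) (Function.support f)
  have hlower : 2 * Δ ^ 2 * (#A : ℤ) ≤
      ∑ ℓ : Dual (ZMod 2) V, (kerWeight g ℓ - Δ) * (kerWeight g ℓ - 2 * Δ) :=
    calc 2 * Δ ^ 2 * (#A : ℤ) = ∑ ℓ ∈ A, (kerWeight g ℓ - Δ) * (kerWeight g ℓ - 2 * Δ) := by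
          rw [sum_congr rfl fun ℓ hℓ => by
            rw [hg, kerWeight_eq_sum_of_forall_support (mem_filter.1 hℓ).2, hsum],
            sum_const, nsmul_eq_mul]
          push_cast
          ring
      _ ≤ ∑ ℓ, (kerWeight g ℓ - Δ) * (kerWeight g ℓ - 2 * Δ) :=
          sum_le_sum_of_subset_of_nonneg (subset_univ A) fun ℓ _ _ => by
            rw [hg]
            exact sub_mul_sub_two_mul_nonneg_of_dvd (Int.natCast_dvd_natCast.2 (hdvd ℓ))
  have hApos : (0 : ℤ) < #A := by exact_mod_cast card_pos.2 ⟨0, by simp [A]⟩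
  rw [← hA] at hmoment
  push_cast at hmoment
  have : (#A : ℤ) * (8 * Δ ^ 2) ≤ #A * (c * (∑ x, g x ^ 2 - Δ ^ 2)) := by linarith
  have := le_of_mul_le_mul_left this hApos
  zify
  simp only [g] at this
  linarith

theorem false_of_forall_eight_dvd_kerWeight (f : V → ℕ) (hf : f 0 = 0) (hf3 : ∀ x, f x ≤ 3)
    (hsum : ∑ x, f x = 24) (hdvd : ∀ ℓ : Dual (ZMod 2) V, 8 ∣ kerWeight f ℓ) : False := by
  set T : Finset V := {x | f x ≠ 0}
  set k := #T
  have hk : 8 ≤ k := by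
    have := sum_le_card_nsmul T f 3 fun x _ => hf3 x
    rw [sum_filter_ne_zero, hsum, smul_eq_mul] at this
    omega
  have hsq : ∑ x, f x ^ 2 + 3 * k ≤ 96 := by
    have hpt : ∀ x ∈ T, f x ^ 2 + 3 ≤ 4 * f x := fun x hx => by
      have := (mem_filter.1 hx).2
      have := hf3 x
      interval_cases f x <;> simp_all
    have := sum_le_sum hpt
    rw [sum_add_distrib, sum_const, smul_eq_mul, ← mul_sum, sum_filter_ne_zero, hsum,
      sum_filter_of_ne fun x _ hx => by simpa using hx] at this
    omega
  have hbound := le_natCard_span_support_mul_sum_sq (Δ := 8) hf hsum hdvd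
  rw [show Function.support f = T by ext; simp [T]] at hbound
  set c := Nat.card (Submodule.span (ZMod 2) (T : Set V))
  have hsmall : 2 ^ k < k * c := by
    have hc : c * ∑ x, f x ^ 2 ≤ c * (96 - 3 * k) := Nat.mul_le_mul_left _ (by omega)
    have hk10 : k ≤ 10 := by
      by_contra! hk10
      have := Nat.mul_le_mul_left c (show 96 - 3 * k ≤ 64 by omega)
      omega
    interval_cases k <;> omega
  obtain ⟨x, hx, y, hy, hxy, ℓ, hℓ⟩ :=
    exists_dual_ne_zero_iff_eq_or_eq T (by rwa [Nat.card_zmod])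
  have hx0 : f x ≠ 0 := (mem_filter.1 hx).2
  have hy0 : f y ≠ 0 := (mem_filter.1 hy).2
  have h24 := kerWeight_add_add_eq_sum hxy hx0 hy0 fun z hz => hℓ z (by simpa [T] using hz)
  have := hf3 x
  have := hf3 y
  have := hdvd ℓ
  omega

end Binary

section Projective

variable {V : Type*} [AddCommGroup V] [Module (ZMod 2) V]

noncomputable def pointWeight (M : Projectivization (ZMod 2) V → ℕ) (x : V) : ℕ :=
  if hx : x = 0 then 0 else M (Projectivization.mk (ZMod 2) x hx)

@[simp]
theorem pointWeight_zero (M : Projectivization (ZMod 2) V → ℕ) : pointWeight M 0 = 0 :=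
  dif_pos rfl

theorem pointWeight_le {M : Projectivization (ZMod 2) V → ℕ} {b : ℕ} (h : ∀ P, M P ≤ b)
    (x : V) : pointWeight M x ≤ b := by
  unfold pointWeight
  split_ifs
  exacts [Nat.zero_le b, h _]

theorem Projectivization.rep_mk_zmod_two {x : V} (hx : x ≠ 0) :
    (Projectivization.mk (ZMod 2) x hx).rep = x := by
  obtain ⟨a, ha⟩ := Projectivization.exists_smul_eq_mk_rep (ZMod 2) x hx
  rw [← ha, Subsingleton.elim a 1, one_smul]

variable [Fintype V]

theorem MVal_eq_sum_pointWeight (M : Projectivization (ZMod 2) V → ℕ)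
    (K : Submodule (ZMod 2) V) : MVal M K = ∑ x with x ∈ K, pointWeight M x := by
  have hbij : Set.BijOn Projectivization.rep {P : Projectivization (ZMod 2) V | P.submodule ≤ K}
      {x | x ≠ 0 ∧ x ∈ K} := by
    refine ⟨fun P hP => ⟨P.rep_nonzero, hP ?_⟩, fun P _ Q _ h => ?_, fun x ⟨hx, hxK⟩ =>
      ⟨Projectivization.mk (ZMod 2) x hx, ?_, Projectivization.rep_mk_zmod_two hx⟩⟩
    · rw [P.submodule_eq]
      exact Submodule.mem_span_singleton_self _
    · rw [← P.mk_rep, ← Q.mk_rep]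
      congr 1
    · show (Projectivization.mk (ZMod 2) x hx).submodule ≤ K
      rw [Projectivization.submodule_mk]
      exact (Submodule.span_singleton_le_iff_mem x K).2 hxK
  rw [MVal, finsum_mem_eq_of_bijOn (g := pointWeight M) _ hbij fun P _ => by
    rw [pointWeight, dif_neg P.rep_nonzero, P.mk_rep]]
  refine finsum_mem_eq_sum_of_inter_support_eq _ ?_
  ext x
  by_cases hx : x = 0 <;> simp [hx, pointWeight]

theorem IsDivisible.dvd_kerWeight_pointWeight {Δ : ℕ} {M : Projectivization (ZMod 2) V → ℕ}
    (hdiv : IsDivisible Δ M) (hM : Δ ∣ MVal M ⊤) (ℓ : Dual (ZMod 2) V) :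
    Δ ∣ kerWeight (pointWeight M) ℓ := by
  have hker : kerWeight (pointWeight M) ℓ = MVal M (LinearMap.ker ℓ) := by
    simp [MVal_eq_sum_pointWeight, kerWeight]
  rcases eq_or_ne ℓ 0 with rfl | hℓ
  · simpa [hker] using hM
  · rw [hker]
    exact ((hdiv _ (Dual.finrank_ker_add_one_of_ne_zero hℓ)).dvd_iff dvd_rfl).2 hM

end Projective

theorem stmt_15 (v : ℕ) (M : Projectivization (ZMod 2) (Fin v → ZMod 2) → ℕ)
    (hdiv : IsDivisible 8 M) (hcard : MVal M ⊤ = 24) (hγ : ∀ P, M P ≤ 3) : False := by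
  have hsum : ∑ x, pointWeight M x = 24 := by
    simpa [MVal_eq_sum_pointWeight] using hcard
  exact false_of_forall_eight_dvd_kerWeight (pointWeight M) (pointWeight_zero M)
    (pointWeight_le hγ) hsum (hdiv.dvd_kerWeight_pointWeight (by rw [hcard]; norm_num))
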